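/- Let H be a finite simple graph with vertex set {1,…,ℓ} and k ≥ 1 edges, and fix e ∈ (0,1). Then there exists a constant C > 0 (depending on H and e) such that every graphon g with edge density e(g) = e satisfies |t(H,g) - e^k| ≤ C·(I(g) - I₀(e)). In particular, among graphons with edge density e, the rate function I attains its minimum I₀(e) only when t(H,g) = e^k, and I(g) - I₀(e) controls |t(H,g) - e^k| linearly. -/

import Mathlib

open MeasureTheory Set

/-- `I₀(u) = (1/2)[u ln u + (1-u) ln(1-u)]`; since `Real.log 0 = 0`,
this automatically satisfies the continuous extension `I₀(0) = I₀(1) = 0`. -/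
noncomputable def I0 (u : ℝ) : ℝ :=
  (1/2) * (u * Real.log u + (1 - u) * Real.log (1 - u))

/-- A graphon: a measurable function `[0,1]² → [0,1]`, symmetric on `[0,1]²`. -/
def IsGraphon (g : ℝ → ℝ → ℝ) : Prop :=
  Measurable (Function.uncurry g) ∧
  (∀ x ∈ Icc (0:ℝ) 1, ∀ y ∈ Icc (0:ℝ) 1, g x y = g y x) ∧
  (∀ x ∈ Icc (0:ℝ) 1, ∀ y ∈ Icc (0:ℝ) 1, g x y ∈ Icc (0:ℝ) 1)

/-- Edge density `e(g) = ∫∫ g`. -/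
noncomputable def edgeDensity (g : ℝ → ℝ → ℝ) : ℝ :=
  ∫ x in Icc (0:ℝ) 1, ∫ y in Icc (0:ℝ) 1, g x y

/-- Triangle density `t(g) = ∫∫∫ g(x,y) g(y,z) g(z,x)`. -/
noncomputable def triangleDensity (g : ℝ → ℝ → ℝ) : ℝ :=
  ∫ x in Icc (0:ℝ) 1, ∫ y in Icc (0:ℝ) 1, ∫ z in Icc (0:ℝ) 1,
    g x y * g y z * g z x

/-- Rate function `I(g) = ∫∫ I₀(g(x,y))`. -/
noncomputable def rateFn (g : ℝ → ℝ → ℝ) : ℝ :=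
  ∫ x in Icc (0:ℝ) 1, ∫ y in Icc (0:ℝ) 1, I0 (g x y)

/-- Homomorphism density `t(H,g) = ∫_{[0,1]^ℓ} ∏_{{i,j} ∈ E(H)} g(x_i, x_j)`,
where each edge `{i,j}` of `H` appears once as an ordered pair with `i < j`. -/
noncomputable def homDensity (ℓ : ℕ) (H : SimpleGraph (Fin ℓ)) [DecidableRel H.Adj]
    (g : ℝ → ℝ → ℝ) : ℝ :=
  ∫ x in Set.univ.pi (fun _ : Fin ℓ => Icc (0:ℝ) 1),
    ∏ p ∈ Finset.univ.filter (fun p : Fin ℓ × Fin ℓ => p.1 < p.2 ∧ H.Adj p.1 p.2),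
      g (x p.1) (x p.2)

/-! Write `g = e + δ`. Since `I₀'' ≥ 2` on `(0,1)`, `I₀` lies above its tangent line at `e` by at
least `(u - e)²`, and the tangent term integrates to zero because `e(g) = e`; hence
`I(g) - I₀(e) ≥ ∫ δ²`. Expanding `t(H,g) = ∫ ∏_{edges} (e + δ)` over the sets `T` of edges, `T = ∅`
gives `e^k`; a single edge gives `∫ δ = 0`, since the two endpoints of an edge are distinct and so
their coordinates are independent and uniform; and for `|T| ≥ 2` the integrand is bounded by
`(δ_p² + δ_q²)/2` for two edges `p ≠ q` of `T`, whose integral is `∫ δ²`. So `2^k` works as `C`. -/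

theorem ConvexOn.add_deriv_mul_sub_le {S : Set ℝ} {f : ℝ → ℝ} {x y f' : ℝ}
    (hf : ConvexOn ℝ S f) (hx : x ∈ S) (hy : y ∈ S) (hf' : HasDerivAt f f' x) :
    f x + f' * (y - x) ≤ f y := by
  rcases lt_trichotomy x y with hxy | rfl | hyx
  · have := hf.le_slope_of_hasDerivAt hx hy hxy hf'
    rw [slope_def_field, le_div_iff₀ (sub_pos.2 hxy)] at this
    linarith
  · simp
  · have := hf.slope_le_of_hasDerivAt hy hx hyx hf'
    rw [slope_def_field, div_le_iff₀ (sub_pos.2 hyx)] at this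
    linarith

lemma continuous_I0 : Continuous I0 := by
  unfold I0
  fun_prop

lemma hasDerivAt_I0 {u : ℝ} (hu : u ∈ Ioo (0:ℝ) 1) :
    HasDerivAt I0 ((Real.log u - Real.log (1 - u)) / 2) u := by
  have hlog := (Real.hasDerivAt_mul_log hu.1.ne').add
    ((Real.hasDerivAt_mul_log (sub_pos.2 hu.2).ne').comp u ((hasDerivAt_id u).const_sub 1))
  exact (hlog.const_mul (1 / 2 : ℝ)).congr_deriv (by ring)

lemma convexOn_I0_sub_sq : ConvexOn ℝ (Icc 0 1) fun u => I0 u - u ^ 2 := by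
  refine convexOn_of_hasDerivWithinAt2_nonneg (convex_Icc 0 1)
    (f' := fun u => (Real.log u - Real.log (1 - u)) / 2 - 2 * u)
    (f'' := fun u => (u⁻¹ + (1 - u)⁻¹) / 2 - 2)
    ((continuous_I0.sub (continuous_pow 2)).continuousOn) (fun u hu => ?_) (fun u hu => ?_)
    (fun u hu => ?_) <;> simp only [interior_Icc] at hu ⊢
  · have := (hasDerivAt_I0 hu).sub ((hasDerivAt_id u).pow 2)
    exact this.hasDerivWithinAt.congr_deriv (by simp)
  · have h1 : (1:ℝ) - u ≠ 0 := (sub_pos.2 hu.2).ne'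
    have := (((Real.hasDerivAt_log hu.1.ne').sub
      ((Real.hasDerivAt_log h1).comp u ((hasDerivAt_id u).const_sub 1))).div_const 2).sub
      ((hasDerivAt_id u).const_mul 2)
    exact this.hasDerivWithinAt.congr_deriv (by ring)
  · have h0 := hu.1
    have h1 := sub_pos.2 hu.2
    have : u⁻¹ + (1 - u)⁻¹ = (u * (1 - u))⁻¹ := by field_simp; ring
    rw [this]
    have : u * (1 - u) ≤ 1 / 4 := by nlinarith [sq_nonneg (u - 1 / 2)]
    have : 4 ≤ (u * (1 - u))⁻¹ := by
      rw [le_inv_comm₀ (by norm_num) (by positivity)]; linarith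
    linarith

lemma I0_add_deriv_mul_add_sq_le {e u : ℝ} (he : e ∈ Ioo (0:ℝ) 1) (hu : u ∈ Icc (0:ℝ) 1) :
    I0 e + deriv I0 e * (u - e) + (u - e) ^ 2 ≤ I0 u := by
  have := convexOn_I0_sub_sq.add_deriv_mul_sub_le (Ioo_subset_Icc_self he) hu
    ((hasDerivAt_I0 he).sub ((hasDerivAt_id e).pow 2))
  rw [(hasDerivAt_I0 he).deriv]
  simp only [id, mul_one] at this
  linarith

lemma integrable_comp_of_forall_mem_Icc {β : Type*} [MeasurableSpace β] {ν : Measure β}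
    [IsFiniteMeasure ν] {f : β → ℝ} (hf : Measurable f) {a b : ℝ} (hfab : ∀ z, f z ∈ Icc a b)
    {Φ : ℝ → ℝ} (hΦ : Continuous Φ) : Integrable (fun z => Φ (f z)) ν := by
  obtain ⟨C, hC⟩ := isCompact_Icc.exists_bound_of_continuousOn hΦ.continuousOn
  exact .of_bound (hΦ.measurable.comp hf).aestronglyMeasurable C
    (ae_of_all _ fun z => hC _ (hfab z))

lemma integral_sq_sub_le_integral_I0_sub {β : Type*} [MeasurableSpace β] {ν : Measure β}
    [IsProbabilityMeasure ν] {f : β → ℝ} (hf : Measurable f) (hf01 : ∀ z, f z ∈ Icc (0:ℝ) 1)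
    {e : ℝ} (he : e ∈ Ioo (0:ℝ) 1) (hfe : ∫ z, f z ∂ν = e) :
    ∫ z, (f z - e) ^ 2 ∂ν ≤ ∫ z, I0 (f z) ∂ν - I0 e := by
  have hint : ∀ {Φ : ℝ → ℝ}, Continuous Φ → Integrable (fun z => Φ (f z)) ν :=
    integrable_comp_of_forall_mem_Icc hf hf01
  have hf_int : Integrable f ν := hint continuous_id
  have hdev_int : Integrable (fun z => f z - e) ν := hf_int.sub (integrable_const e)
  have hlin_int : Integrable (fun z => I0 e + deriv I0 e * (f z - e)) ν :=
    (integrable_const _).add (hdev_int.const_mul _)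
  have hsq_int : Integrable (fun z => (f z - e) ^ 2) ν :=
    hint (Φ := fun u => (u - e) ^ 2) (by fun_prop)
  have hlin : ∫ z, (I0 e + deriv I0 e * (f z - e)) ∂ν = I0 e := by
    rw [integral_add (integrable_const _) (hdev_int.const_mul _),
      integral_const_mul, integral_sub hf_int (integrable_const e), hfe]
    simp
  have hmono : ∫ z, (I0 e + deriv I0 e * (f z - e) + (f z - e) ^ 2) ∂ν ≤ ∫ z, I0 (f z) ∂ν :=
    integral_mono (hlin_int.add hsq_int) (hint continuous_I0)
      fun z => I0_add_deriv_mul_add_sq_le he (hf01 z)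
  rw [integral_add hlin_int hsq_int, hlin] at hmono
  linarith

lemma map_pi_pair_eq_prod {ι α : Type*} [Fintype ι] [MeasurableSpace α] (μ : Measure α)
    [IsProbabilityMeasure μ] {a b : ι} (hab : a ≠ b) :
    (Measure.pi fun _ : ι => μ).map (fun x => (x a, x b)) = μ.prod μ := by
  have hind : ProbabilityTheory.IndepFun (fun x : ι → α => x a) (fun x => x b) _ :=
    (ProbabilityTheory.iIndepFun_pi (μ := fun _ : ι => μ) (X := fun _ => id)
      fun _ => aemeasurable_id).indepFun hab
  rw [hind.map_prod_eq_prod_map_map (measurable_pi_apply a).aemeasurable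
    (measurable_pi_apply b).aemeasurable, (measurePreserving_eval _ a).map_eq,
    (measurePreserving_eval _ b).map_eq]

lemma integral_pi_comp_pair {ι α : Type*} [Fintype ι] [MeasurableSpace α] (μ : Measure α)
    [IsProbabilityMeasure μ] {a b : ι} (hab : a ≠ b) {F : α → α → ℝ}
    (hF : Measurable (Function.uncurry F)) :
    ∫ x, F (x a) (x b) ∂(Measure.pi fun _ : ι => μ) = ∫ z, F z.1 z.2 ∂(μ.prod μ) := by
  rw [← map_pi_pair_eq_prod μ hab]
  exact (integral_map (by fun_prop : Measurable fun x : ι → α => (x a, x b)).aemeasurable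
    hF.aestronglyMeasurable).symm

lemma abs_prod_le_sq_add_sq_div_two {ι : Type*} {T : Finset ι} {y : ι → ℝ}
    (hy : ∀ i ∈ T, |y i| ≤ 1) {p q : ι} (hp : p ∈ T) (hq : q ∈ T) (hpq : p ≠ q) :
    |∏ i ∈ T, y i| ≤ (y p ^ 2 + y q ^ 2) / 2 := by
  classical
  have hq' : q ∈ T.erase p := Finset.mem_erase.2 ⟨hpq.symm, hq⟩
  have hrest : |∏ i ∈ (T.erase p).erase q, y i| ≤ 1 := by
    rw [Finset.abs_prod]
    exact Finset.prod_le_one (fun _ _ => abs_nonneg _)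
      fun i hi => hy i (Finset.mem_of_mem_erase (Finset.mem_of_mem_erase hi))
  rw [← Finset.mul_prod_erase T y hp, ← Finset.mul_prod_erase _ y hq', abs_mul, abs_mul]
  calc |y p| * (|y q| * |∏ i ∈ (T.erase p).erase q, y i|) ≤ |y p| * (|y q| * 1) := by gcongr
    _ ≤ (y p ^ 2 + y q ^ 2) / 2 := by
      nlinarith [sq_nonneg (|y p| - |y q|), sq_abs (y p), sq_abs (y q)]

lemma integrable_prod_of_abs_le_one {β κ : Type*} [MeasurableSpace β] {ν : Measure β}
    [IsFiniteMeasure ν] {δ : κ → β → ℝ} (hδ : ∀ p, Measurable (δ p)) (hδ1 : ∀ p x, |δ p x| ≤ 1)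
    (T : Finset κ) : Integrable (fun x => ∏ p ∈ T, δ p x) ν :=
  .of_bound (Finset.measurable_prod T fun p _ => hδ p).aestronglyMeasurable 1
    (ae_of_all _ fun x => by
      rw [Real.norm_eq_abs, Finset.abs_prod]
      exact Finset.prod_le_one (fun _ _ => abs_nonneg _) fun _ _ => hδ1 _ _)

lemma integral_prod_add_const_eq_sum {β κ : Type*} [MeasurableSpace β] {ν : Measure β}
    [IsFiniteMeasure ν] [DecidableEq κ] {δ : κ → β → ℝ} (hδ : ∀ p, Measurable (δ p))
    (hδ1 : ∀ p x, |δ p x| ≤ 1) (e : ℝ) (S : Finset κ) :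
    ∫ x, ∏ p ∈ S, (δ p x + e) ∂ν
      = ∑ T ∈ S.powerset, (∫ x, ∏ p ∈ T, δ p x ∂ν) * e ^ (S \ T).card := by
  simp_rw [Finset.prod_add, ← integral_mul_const, Finset.prod_const]
  exact integral_finsetSum _ fun T _ => (integrable_prod_of_abs_le_one hδ hδ1 T).mul_const _

section HomomorphismCounting

variable {ι α : Type*} [Fintype ι] [MeasurableSpace α] (μ : Measure α) [IsProbabilityMeasure μ]

lemma abs_integral_prod_le_integral_sq {δ : α → α → ℝ} (hδ : Measurable (Function.uncurry δ))
    (hδ1 : ∀ x y, |δ x y| ≤ 1) (hδ0 : ∫ z, δ z.1 z.2 ∂(μ.prod μ) = 0) {T : Finset (ι × ι)}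
    (hT : ∀ p ∈ T, p.1 ≠ p.2) (hTne : T.Nonempty) :
    |∫ x, ∏ p ∈ T, δ (x p.1) (x p.2) ∂(Measure.pi fun _ : ι => μ)|
      ≤ ∫ z, δ z.1 z.2 ^ 2 ∂(μ.prod μ) := by
  have hmeas (p : ι × ι) : Measurable fun x : ι → α => δ (x p.1) (x p.2) :=
    hδ.comp (by fun_prop : Measurable fun x : ι → α => (x p.1, x p.2))
  have hsq_int (p : ι × ι) :
      Integrable (fun x : ι → α => δ (x p.1) (x p.2) ^ 2) (Measure.pi fun _ : ι => μ) :=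
    .of_bound ((hmeas p).pow_const 2).aestronglyMeasurable 1 (ae_of_all _ fun x => by
      rw [Real.norm_eq_abs, abs_pow]; exact pow_le_one₀ (abs_nonneg _) (hδ1 _ _))
  have hsq (p : ι × ι) (hp : p ∈ T) :
      ∫ x, δ (x p.1) (x p.2) ^ 2 ∂(Measure.pi fun _ : ι => μ) = ∫ z, δ z.1 z.2 ^ 2 ∂(μ.prod μ) :=
    integral_pi_comp_pair μ (hT p hp) (F := fun a b => δ a b ^ 2) (hδ.pow_const 2)
  rcases hTne.exists_eq_singleton_or_nontrivial with ⟨p, rfl⟩ | ⟨p, hp, q, hq, hpq⟩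
  · simp only [Finset.prod_singleton]
    rw [integral_pi_comp_pair μ (hT p (Finset.mem_singleton_self p)) hδ, hδ0, abs_zero]
    exact integral_nonneg fun _ => sq_nonneg _
  · calc |∫ x, ∏ p ∈ T, δ (x p.1) (x p.2) ∂(Measure.pi fun _ : ι => μ)|
        ≤ ∫ x, |∏ p ∈ T, δ (x p.1) (x p.2)| ∂(Measure.pi fun _ : ι => μ) :=
          abs_integral_le_integral_abs
      _ ≤ ∫ x, (δ (x p.1) (x p.2) ^ 2 + δ (x q.1) (x q.2) ^ 2) / 2
            ∂(Measure.pi fun _ : ι => μ) := by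
          refine integral_mono (integrable_prod_of_abs_le_one hmeas (fun _ _ => hδ1 _ _) T).abs
            (((hsq_int p).add (hsq_int q)).div_const 2) fun x =>
            abs_prod_le_sq_add_sq_div_two (fun r _ => hδ1 _ _) hp hq hpq
      _ = ∫ z, δ z.1 z.2 ^ 2 ∂(μ.prod μ) := by
          rw [integral_div, integral_add (hsq_int p) (hsq_int q), hsq p hp, hsq q hq]
          ring

lemma abs_integral_prod_sub_pow_le {f : α → α → ℝ} (hf : Measurable (Function.uncurry f))
    (hf01 : ∀ x y, f x y ∈ Icc (0:ℝ) 1) {e : ℝ} (he : e ∈ Icc (0:ℝ) 1)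
    (hfe : ∫ z, f z.1 z.2 ∂(μ.prod μ) = e) {S : Finset (ι × ι)} (hS : ∀ p ∈ S, p.1 ≠ p.2) :
    |∫ x, ∏ p ∈ S, f (x p.1) (x p.2) ∂(Measure.pi fun _ : ι => μ) - e ^ S.card|
      ≤ 2 ^ S.card * ∫ z, (f z.1 z.2 - e) ^ 2 ∂(μ.prod μ) := by
  classical
  set δ : α → α → ℝ := fun x y => f x y - e with hδ_def
  set D := ∫ z, δ z.1 z.2 ^ 2 ∂(μ.prod μ)
  have hδ : Measurable (Function.uncurry δ) := hf.sub measurable_const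
  have hδ1 (x y : α) : |δ x y| ≤ 1 := by
    have := hf01 x y
    rw [abs_le]; constructor <;> linarith [he.1, he.2, this.1, this.2]
  have hδ0 : ∫ z, δ z.1 z.2 ∂(μ.prod μ) = 0 := by
    have hf_int : Integrable (fun z : α × α => f z.1 z.2) (μ.prod μ) :=
      integrable_comp_of_forall_mem_Icc hf (fun z => hf01 z.1 z.2) continuous_id
    rw [integral_sub hf_int (integrable_const e), hfe]
    simp
  have hterm (T : Finset (ι × ι)) (hT : T ∈ S.powerset.erase ∅) :
      |(∫ x, ∏ p ∈ T, δ (x p.1) (x p.2) ∂(Measure.pi fun _ : ι => μ)) * e ^ (S \ T).card| ≤ D := by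
    obtain ⟨hTne, hTS⟩ := Finset.mem_erase.1 hT
    rw [abs_mul, abs_of_nonneg (pow_nonneg he.1 _)]
    exact (mul_le_of_le_one_right (abs_nonneg _) (pow_le_one₀ he.1 he.2)).trans
      (abs_integral_prod_le_integral_sq μ hδ hδ1 hδ0
        (fun p hp => hS p (Finset.mem_powerset.1 hTS hp)) (Finset.nonempty_iff_ne_empty.2 hTne))
  have hmeas (p : ι × ι) : Measurable fun x : ι → α => δ (x p.1) (x p.2) :=
    hδ.comp (by fun_prop : Measurable fun x : ι → α => (x p.1, x p.2))
  have hexpand := integral_prod_add_const_eq_sum (ν := Measure.pi fun _ : ι => μ) hmeas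
    (fun p x => hδ1 _ _) e S
  simp only [hδ_def, sub_add_cancel] at hexpand
  rw [hexpand, ← Finset.add_sum_erase _ _ (Finset.empty_mem_powerset S)]
  simp only [Finset.prod_empty, integral_const, probReal_univ, Finset.sdiff_empty, smul_eq_mul,
    one_mul, add_sub_cancel_left]
  calc _ ≤ ∑ T ∈ S.powerset.erase ∅, D :=
        (Finset.abs_sum_le_sum_abs _ _).trans (Finset.sum_le_sum hterm)
    _ ≤ 2 ^ S.card * D := by
      rw [Finset.sum_const, nsmul_eq_mul]
      gcongr
      exact_mod_cast Finset.card_erase_le.trans (Finset.card_powerset S).le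

end HomomorphismCounting

instance : IsProbabilityMeasure (volume.restrict (Icc (0:ℝ) 1)) :=
  ⟨by simp [Real.volume_Icc]⟩

noncomputable def extendIcc (g : ℝ → ℝ → ℝ) (x y : ℝ) : ℝ :=
  g (projIcc 0 1 zero_le_one x) (projIcc 0 1 zero_le_one y)

lemma extendIcc_of_mem {g : ℝ → ℝ → ℝ} {x y : ℝ} (hx : x ∈ Icc (0:ℝ) 1) (hy : y ∈ Icc (0:ℝ) 1) :
    extendIcc g x y = g x y := by
  simp [extendIcc, projIcc_of_mem _ hx, projIcc_of_mem _ hy]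

namespace IsGraphon

variable {g : ℝ → ℝ → ℝ}

lemma measurable_extendIcc (hg : IsGraphon g) : Measurable (Function.uncurry (extendIcc g)) :=
  hg.1.comp (by fun_prop : Measurable fun z : ℝ × ℝ =>
    ((projIcc 0 1 zero_le_one z.1 : ℝ), (projIcc 0 1 zero_le_one z.2 : ℝ)))

lemma extendIcc_mem_Icc (hg : IsGraphon g) (x y : ℝ) : extendIcc g x y ∈ Icc (0:ℝ) 1 :=
  hg.2.2 _ (projIcc 0 1 zero_le_one x).2 _ (projIcc 0 1 zero_le_one y).2

lemma setIntegral_comp_eq_integral_prod (hg : IsGraphon g) {Φ : ℝ → ℝ} (hΦ : Continuous Φ) :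
    ∫ x in Icc (0:ℝ) 1, ∫ y in Icc (0:ℝ) 1, Φ (g x y)
      = ∫ z, Φ (extendIcc g z.1 z.2)
          ∂((volume.restrict (Icc (0:ℝ) 1)).prod (volume.restrict (Icc (0:ℝ) 1))) := by
  calc _ = ∫ x in Icc (0:ℝ) 1, ∫ y in Icc (0:ℝ) 1, Φ (extendIcc g x y) :=
        setIntegral_congr_fun measurableSet_Icc fun x hx =>
          setIntegral_congr_fun measurableSet_Icc fun y hy => by rw [extendIcc_of_mem hx hy]
    _ = _ := integral_integral (integrable_comp_of_forall_mem_Icc hg.measurable_extendIcc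
          (fun z => hg.extendIcc_mem_Icc z.1 z.2) hΦ)

end IsGraphon

lemma homDensity_eq_integral_pi_extendIcc (ℓ : ℕ) (H : SimpleGraph (Fin ℓ)) [DecidableRel H.Adj]
    (g : ℝ → ℝ → ℝ) :
    homDensity ℓ H g
      = ∫ x, ∏ p ∈ Finset.univ.filter (fun p : Fin ℓ × Fin ℓ => p.1 < p.2 ∧ H.Adj p.1 p.2),
          extendIcc g (x p.1) (x p.2) ∂(Measure.pi fun _ => volume.restrict (Icc (0:ℝ) 1)) := by
  rw [homDensity, ← Measure.restrict_pi_pi]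
  refine setIntegral_congr_fun (MeasurableSet.univ_pi fun _ => measurableSet_Icc) fun x hx =>
    Finset.prod_congr rfl fun p _ => ?_
  rw [extendIcc_of_mem (hx p.1 (mem_univ _)) (hx p.2 (mem_univ _))]

theorem homDensity_linear_bound_general (ℓ : ℕ) (H : SimpleGraph (Fin ℓ))
    [DecidableRel H.Adj] (k : ℕ)
    (hkcard : k =
      (Finset.univ.filter (fun p : Fin ℓ × Fin ℓ => p.1 < p.2 ∧ H.Adj p.1 p.2)).card)
    (e : ℝ) (he : e ∈ Ioo (0:ℝ) 1) :
    ∃ C : ℝ, 0 < C ∧ ∀ g : ℝ → ℝ → ℝ, IsGraphon g → edgeDensity g = e →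
      |homDensity ℓ H g - e ^ k| ≤ C * (rateFn g - I0 e) := by
  refine ⟨2 ^ k, by positivity, fun g hg hge => ?_⟩
  have hedge := (hg.setIntegral_comp_eq_integral_prod continuous_id).symm.trans hge
  rw [homDensity_eq_integral_pi_extendIcc, rateFn,
    hg.setIntegral_comp_eq_integral_prod continuous_I0, hkcard]
  calc _ ≤ 2 ^ _ * ∫ z, (extendIcc g z.1 z.2 - e) ^ 2
          ∂((volume.restrict (Icc (0:ℝ) 1)).prod (volume.restrict (Icc (0:ℝ) 1))) :=
        abs_integral_prod_sub_pow_le _ hg.measurable_extendIcc hg.extendIcc_mem_Icc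
          (Ioo_subset_Icc_self he) hedge fun p hp => (Finset.mem_filter.1 hp).2.1.ne
    _ ≤ _ := by
        gcongr
        exact integral_sq_sub_le_integral_I0_sub hg.measurable_extendIcc
          (fun z => hg.extendIcc_mem_Icc z.1 z.2) he hedge

/-- For a finite simple graph `H` with `k ≥ 1` edges and `e ∈ (0,1)` there is
`C > 0` such that every graphon `g` with edge density `e` satisfies
`|t(H,g) - e^k| ≤ C (I(g) - I₀(e))`. -/
theorem homDensity_linear_bound (ℓ : ℕ) (H : SimpleGraph (Fin ℓ))
    [DecidableRel H.Adj] (k : ℕ) (hk : 1 ≤ k)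
    (hkcard : k =
      (Finset.univ.filter (fun p : Fin ℓ × Fin ℓ => p.1 < p.2 ∧ H.Adj p.1 p.2)).card)
    (e : ℝ) (he : e ∈ Ioo (0:ℝ) 1) :
    ∃ C : ℝ, 0 < C ∧ ∀ g : ℝ → ℝ → ℝ, IsGraphon g → edgeDensity g = e →
      |homDensity ℓ H g - e ^ k| ≤ C * (rateFn g - I0 e) :=
  homDensity_linear_bound_general ℓ H k hkcard e he
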